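/- For all nonnegative integers m, n and every integer r: \sum_{k=1}^{n} k^m F_{k+r} = -\delta_{m,0} F_r + n^m F_{n+r+2} + (-1)^{m+1} \sum_{j=0}^{m} A(m,j) F_{j+m+r+1} - \sum_{s=1}^{m} (-1)^{s+1} \binom{m}{s} n^{m-s} \sum_{j=1}^{s} A(s,j) F_{j+n+s+r+1}, where \delta_{m,0} is the Kronecker delta. -/

import Mathlib

/-!
Write `E_t = ∑_{k ≥ 0} k^t X^k` and `P_t = ∑_j A(t,j) X^j`. Coefficientwise, `(1 - X)^(t+1) E_t = P_t`;
that `A(t,j) = 0` for `j > t` is the vanishing of the `(t+1)`-st finite difference of `y ↦ y^t`.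
Splitting off the first `n` terms of `E_t` and expanding the tail `X^n ∑_k (k + n)^t X^k` binomially
gives a polynomial identity for `(1 - X)^(t+1) ∑_{k<n} k^t X^k`. A root `x` of `X^2 - X - 1`
satisfies `(1 - x)(-x) = 1`, so the identity can be divided by `(1 - x)^(t+1)` at `x`. Every
sequence with the Fibonacci recurrence, in particular `k ↦ F_{k+r}`, is an additive image of the
powers of `X` in `ℤ[X]/(X^2 - X - 1)`, so the identity transfers to it.
-/

/-- Fibonacci numbers over the integers, `F_{-n} = (-1)^{n-1} F_n`. -/
def fibZ (n : ℤ) : ℤ :=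
  if 0 ≤ n then (Nat.fib n.toNat : ℤ)
  else (-1) ^ ((-n).toNat + 1) * (Nat.fib (-n).toNat : ℤ)

/-- The Eulerian numbers `A(i,j) = ∑_{t=0}^{j} (-1)^t C(i+1,t) (j-t)^i`. -/
def eulerianA (i j : ℕ) : ℤ :=
  ∑ t ∈ Finset.range (j + 1), (-1 : ℤ) ^ t * (Nat.choose (i + 1) t) * ((j - t : ℕ) ^ i : ℤ)

open Finset Polynomial

theorem eulerianA_eq_zero_of_lt {i j : ℕ} (h : i < j) : eulerianA i j = 0 := by
  -- `A(i,j)` is the `(i+1)`-st forward difference of `y ↦ y^i` at `y = j - i - 1`.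
  have hΔ := congrFun (fwdDiff_iter_pow_eq_zero_of_lt (R := ℤ) (Nat.lt_succ_self i)) (j - (i + 1))
  rw [fwdDiff_iter_eq_sum_shift, ← sum_range_reflect, Pi.zero_apply] at hΔ
  rw [← hΔ, eulerianA, ← sum_subset (range_subset_range.2 (by omega : i + 2 ≤ j + 1))]
  · refine sum_congr rfl fun t hmem => ?_
    have ht : t ≤ i + 1 := by rw [mem_range] at hmem; omega
    rw [Nat.succ_eq_add_one, Nat.add_sub_cancel, Nat.sub_sub_self ht, Nat.choose_symm ht,
      smul_eq_mul, nsmul_one, Nat.cast_sub ht, Nat.cast_sub (by omega : t ≤ j)]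
    push_cast
    ring
  · intro t _ ht
    rw [Nat.choose_eq_zero_of_lt (by simp at ht; omega)]
    simp

theorem eulerianA_zero_right (n : ℕ) : eulerianA n 0 = 0 ^ n := by
  simp [eulerianA]

noncomputable def eulerianPoly (n : ℕ) : ℤ[X] :=
  ∑ j ∈ range (n + 1), C (eulerianA n j) * X ^ j

theorem coeff_eulerianPoly (n j : ℕ) : (eulerianPoly n).coeff j = eulerianA n j := by
  simp only [eulerianPoly, finsetSum_coeff, coeff_C_mul_X_pow, sum_ite_eq, mem_range]
  split_ifs with h
  · rfl
  · exact (eulerianA_eq_zero_of_lt (by omega)).symm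

theorem aeval_eulerianPoly {R : Type*} [CommRing R] (x : R) (n : ℕ) :
    aeval x (eulerianPoly n) = ∑ j ∈ range (n + 1), (eulerianA n j : R) * x ^ j := by
  simp [eulerianPoly]

theorem Polynomial.coeff_one_sub_X_pow {R : Type*} [CommRing R] (N a : ℕ) :
    ((1 - X : R[X]) ^ N).coeff a = (-1) ^ a * N.choose a := by
  rw [show (1 - X : R[X]) ^ N = C ((-1) ^ N) * (X + C (-1)) ^ N by
      simp [← mul_pow, sub_eq_add_neg],
    coeff_C_mul, coeff_X_add_C_pow, ← mul_assoc, ← pow_add]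
  rcases le_or_gt a N with h | h
  · rw [show N + (N - a) = a + 2 * (N - a) by omega, pow_add, pow_mul]
    simp
  · simp [Nat.choose_eq_zero_of_lt h]

theorem coe_eulerianPoly (n : ℕ) :
    (eulerianPoly n : PowerSeries ℤ) =
      (1 - PowerSeries.X) ^ (n + 1) * PowerSeries.mk fun k => (k : ℤ) ^ n := by
  rw [show (1 - PowerSeries.X : PowerSeries ℤ) ^ (n + 1) = ((1 - X) ^ (n + 1) : ℤ[X]) by simp]
  ext j
  rw [PowerSeries.coeff_mul, Nat.sum_antidiagonal_eq_sum_range_succ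
    (fun a b => PowerSeries.coeff a _ * PowerSeries.coeff b _)]
  simp only [coeff_coe, coeff_eulerianPoly, coeff_one_sub_X_pow, PowerSeries.coeff_mk, eulerianA]

theorem PowerSeries.mk_pow_eq_sum_range_add_X_pow_mul (t n : ℕ) :
    (mk fun k => (k : ℤ) ^ t) =
      ∑ k ∈ range n, C ((k : ℤ) ^ t) * X ^ k +
        X ^ n * ∑ s ∈ range (t + 1), C ((t.choose s * n ^ (t - s) : ℕ) : ℤ) *
          mk fun k => (k : ℤ) ^ s := by
  ext j
  simp only [map_add, map_sum, coeff_X_pow_mul', coeff_C_mul, coeff_X_pow, coeff_mk, mul_ite,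
    mul_one, mul_zero, sum_ite_eq, mem_range]
  rcases lt_or_ge j n with h | h
  · simp [h, Nat.not_le.2 h]
  · simp only [Nat.not_lt.2 h, h, if_true, if_false, zero_add]
    rw [← Nat.sub_add_cancel h, Nat.add_sub_cancel]
    push_cast
    rw [add_pow]
    exact sum_congr rfl fun s _ => by ring

theorem one_sub_X_pow_mul_sum_range_eq (t n : ℕ) :
    (1 - X) ^ (t + 1) * ∑ k ∈ range n, C ((k : ℤ) ^ t) * X ^ k =
      eulerianPoly t - X ^ n * ∑ s ∈ range (t + 1),
        C ((t.choose s * n ^ (t - s) : ℕ) : ℤ) * (1 - X) ^ (t - s) * eulerianPoly s := by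
  apply Polynomial.coe_injective
  simp only [← coeToPowerSeries.ringHom_apply, map_sub, map_mul, map_pow coeToPowerSeries.ringHom,
    map_sum, map_one]
  simp only [coeToPowerSeries.ringHom_apply, coe_X, coe_C, coe_eulerianPoly]
  have hsum : ∑ s ∈ range (t + 1), PowerSeries.C ((t.choose s * n ^ (t - s) : ℕ) : ℤ) *
        (1 - PowerSeries.X) ^ (t - s) *
          ((1 - PowerSeries.X) ^ (s + 1) * PowerSeries.mk fun k => (k : ℤ) ^ s) =
      (1 - PowerSeries.X) ^ (t + 1) * ∑ s ∈ range (t + 1),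
        PowerSeries.C ((t.choose s * n ^ (t - s) : ℕ) : ℤ) * PowerSeries.mk fun k => (k : ℤ) ^ s := by
    rw [mul_sum]
    refine sum_congr rfl fun s hs => ?_
    rw [show t + 1 = (t - s) + (s + 1) by simp at hs; omega, pow_add]
    ring
  linear_combination (-(1 - PowerSeries.X) ^ (t + 1)) *
    PowerSeries.mk_pow_eq_sum_range_add_X_pow_mul t n + PowerSeries.X ^ n * hsum

theorem sum_range_pow_mul_pow_of_mul_eq_one {R : Type*} [CommRing R] {x y : R}
    (hxy : (1 - x) * y = 1) (t n : ℕ) :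
    ∑ k ∈ range n, (k : R) ^ t * x ^ k =
      y ^ (t + 1) * aeval x (eulerianPoly t) - x ^ n * ∑ s ∈ range (t + 1),
        (t.choose s * n ^ (t - s) : R) * y ^ (s + 1) * aeval x (eulerianPoly s) := by
  have hpow (k : ℕ) : (1 - x) ^ k * y ^ k = 1 := by rw [← mul_pow, hxy, one_pow]
  have h := congrArg (aeval x) (one_sub_X_pow_mul_sum_range_eq t n)
  simp only [map_mul, map_sub, map_sum, map_pow, map_one, map_natCast, aeval_X, Nat.cast_mul,
    Nat.cast_pow] at h
  have hsum : ∑ s ∈ range (t + 1), (t.choose s * n ^ (t - s) : R) * (1 - x) ^ (t - s) *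
        aeval x (eulerianPoly s) * y ^ (t + 1) =
      ∑ s ∈ range (t + 1), (t.choose s * n ^ (t - s) : R) * y ^ (s + 1) *
        aeval x (eulerianPoly s) := by
    refine sum_congr rfl fun s hs => ?_
    rw [show t + 1 = (t - s) + (s + 1) by simp at hs; omega, pow_add]
    linear_combination (t.choose s * n ^ (t - s) * y ^ (s + 1) * aeval x (eulerianPoly s)) *
      hpow (t - s)
  rw [← hsum, ← sum_mul]
  linear_combination (-∑ k ∈ range n, (k : R) ^ t * x ^ k) * hpow (t + 1) + y ^ (t + 1) * h

theorem Finset.sum_range_succ_eq_add_sum_Icc {M : Type*} [AddCommMonoid M] (f : ℕ → M) (n : ℕ) :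
    ∑ k ∈ range (n + 1), f k = f 0 + ∑ k ∈ Icc 1 n, f k := by
  rw [Nat.range_succ_eq_Icc_zero, ← insert_Icc_add_one_left_eq_Icc n.zero_le, sum_insert (by simp),
    zero_add]

theorem neg_pow_mul_aeval_eulerianPoly {R : Type*} [CommRing R] (x : R) (s : ℕ) :
    (-x) ^ (s + 1) * aeval x (eulerianPoly s) =
      (-1) ^ (s + 1) * ∑ j ∈ range (s + 1), (eulerianA s j : R) * x ^ (j + s + 1) := by
  rw [aeval_eulerianPoly, mul_sum, mul_sum]
  exact sum_congr rfl fun j _ => by ring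

theorem neg_pow_mul_aeval_eulerianPoly_of_ne_zero {R : Type*} [CommRing R] (x : R) {s : ℕ}
    (hs : s ≠ 0) :
    (-x) ^ (s + 1) * aeval x (eulerianPoly s) =
      (-1) ^ (s + 1) * ∑ j ∈ Icc 1 s, (eulerianA s j : R) * x ^ (j + s + 1) := by
  rw [neg_pow_mul_aeval_eulerianPoly, sum_range_succ_eq_add_sum_Icc, eulerianA_zero_right,
    zero_pow hs, Int.cast_zero, zero_mul, zero_add]

-- A `ℤ`-linear relation among powers of `x` (hence `x ^ 0` rather than `1`), so that it can be
-- pushed through additive maps.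
theorem sum_Icc_smul_pow_of_sq_eq_add_one {R : Type*} [CommRing R] {x : R} (hx : x ^ 2 = x + 1)
    (m n : ℕ) :
    ∑ k ∈ Icc 1 n, (k : ℤ) ^ m • x ^ k =
      -(if m = 0 then (1 : ℤ) else 0) • x ^ 0
        + (n : ℤ) ^ m • x ^ (n + 2)
        + (-1 : ℤ) ^ (m + 1) • ∑ j ∈ range (m + 1), eulerianA m j • x ^ (j + m + 1)
        - ∑ s ∈ Icc 1 m, ((-1 : ℤ) ^ (s + 1) * m.choose s * (n : ℤ) ^ (m - s)) •
            ∑ j ∈ Icc 1 s, eulerianA s j • x ^ (j + n + s + 1) := by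
  have key := sum_range_pow_mul_pow_of_mul_eq_one (by linear_combination hx : (1 - x) * -x = 1) m n
  have hIcc := sum_range_succ_eq_add_sum_Icc (fun k => (k : R) ^ m * x ^ k) n
  rw [sum_range_succ, key, sum_range_succ_eq_add_sum_Icc _ m] at hIcc
  have hS : x ^ n * ∑ s ∈ Icc 1 m, (m.choose s * n ^ (m - s) : R) * (-x) ^ (s + 1) *
        aeval x (eulerianPoly s) =
      ∑ s ∈ Icc 1 m, (-1) ^ (s + 1) * m.choose s * n ^ (m - s) *
        ∑ j ∈ Icc 1 s, (eulerianA s j : R) * x ^ (j + n + s + 1) := by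
    rw [mul_sum]
    refine sum_congr rfl fun s hs => ?_
    rw [mul_assoc _ ((-x) ^ (s + 1)),
      neg_pow_mul_aeval_eulerianPoly_of_ne_zero x (by simp at hs; omega)]
    simp only [mul_sum]
    exact sum_congr rfl fun j _ => by ring
  have hP₀ : aeval x (eulerianPoly 0) = 1 := by simp [aeval_eulerianPoly, eulerianA]
  rw [neg_pow_mul_aeval_eulerianPoly, hP₀, mul_add, hS, Nat.choose_zero_right, Nat.cast_one,
    Nat.cast_zero, zero_pow_eq] at hIcc
  simp only [zsmul_eq_mul]
  push_cast
  linear_combination -hIcc - (n ^ m * x ^ n : R) * hx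

theorem root_sq_eq_root_add_one :
    AdjoinRoot.root (X ^ 2 - X - 1 : ℤ[X]) ^ 2 = AdjoinRoot.root _ + 1 := by
  have h := AdjoinRoot.mk_self (f := (X ^ 2 - X - 1 : ℤ[X]))
  rw [map_sub, map_sub, map_pow, AdjoinRoot.mk_X, map_one] at h
  linear_combination h

theorem exists_addMonoidHom_root_pow_eq {M : Type*} [AddCommGroup M] (f : ℕ → M)
    (hf : ∀ e, f (e + 2) = f (e + 1) + f e) :
    ∃ L : AdjoinRoot (X ^ 2 - X - 1 : ℤ[X]) →+ M, ∀ e, L (AdjoinRoot.root _ ^ e) = f e := by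
  have hg : (X ^ 2 - X - 1 : ℤ[X]).Monic := by monicity!
  have hdeg : (X ^ 2 - X - 1 : ℤ[X]).natDegree = 2 := by compute_degree!
  let L := (AdjoinRoot.powerBasis' hg).basis.constr ℤ fun i => f i
  have hL (i : ℕ) (hi : i < 2) : L (AdjoinRoot.root _ ^ i) = f i := by
    have h := (AdjoinRoot.powerBasis' hg).basis.constr_basis ℤ (fun i => f i)
      ⟨i, by rwa [AdjoinRoot.powerBasis'_dim, hdeg]⟩
    simpa only [PowerBasis.coe_basis, AdjoinRoot.powerBasis'_gen] using h
  refine ⟨L.toAddMonoidHom, fun e => ?_⟩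
  induction e using Nat.twoStepInduction with
  | zero => exact hL 0 (by norm_num)
  | one => exact hL 1 (by norm_num)
  | more e ih₀ ih₁ =>
    rw [show AdjoinRoot.root _ ^ (e + 2) = AdjoinRoot.root _ ^ (e + 1) + AdjoinRoot.root _ ^ e by
      linear_combination AdjoinRoot.root (X ^ 2 - X - 1 : ℤ[X]) ^ e * root_sq_eq_root_add_one,
      map_add, ih₀, ih₁, hf]

theorem sum_Icc_pow_smul_of_fib_rec {M : Type*} [AddCommGroup M] (f : ℕ → M)
    (hf : ∀ e, f (e + 2) = f (e + 1) + f e) (m n : ℕ) :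
    ∑ k ∈ Icc 1 n, (k : ℤ) ^ m • f k =
      -(if m = 0 then (1 : ℤ) else 0) • f 0
        + (n : ℤ) ^ m • f (n + 2)
        + (-1 : ℤ) ^ (m + 1) • ∑ j ∈ range (m + 1), eulerianA m j • f (j + m + 1)
        - ∑ s ∈ Icc 1 m, ((-1 : ℤ) ^ (s + 1) * m.choose s * (n : ℤ) ^ (m - s)) •
            ∑ j ∈ Icc 1 s, eulerianA s j • f (j + n + s + 1) := by
  obtain ⟨L, hL⟩ := exists_addMonoidHom_root_pow_eq f hf
  simpa only [map_sum, map_add, map_sub, map_neg, map_zsmul, hL] using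
    congrArg L (sum_Icc_smul_pow_of_sq_eq_add_one root_sq_eq_root_add_one m n)

theorem fibZ_natCast (k : ℕ) : fibZ k = Nat.fib k := by
  simp [fibZ]

theorem fibZ_neg_natCast (k : ℕ) : fibZ (-k) = (-1) ^ (k + 1) * Nat.fib k := by
  rcases k with _ | k
  · simp [fibZ]
  · rw [fibZ, if_neg (by omega), neg_neg, Int.toNat_natCast]

theorem fibZ_add_two (z : ℤ) : fibZ (z + 2) = fibZ (z + 1) + fibZ z := by
  have hnat (k : ℕ) : fibZ (k + 2) = fibZ (k + 1) + fibZ k := by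
    have h₂ := fibZ_natCast (k + 2)
    have h₁ := fibZ_natCast (k + 1)
    push_cast at h₁ h₂
    rw [h₂, h₁, fibZ_natCast, Nat.fib_add_two, Nat.cast_add, add_comm]
  obtain ⟨k, rfl | rfl⟩ := Int.eq_nat_or_neg z
  · exact hnat k
  · rcases k with _ | _ | k
    · simpa using hnat 0
    · simp [fibZ]
    · rw [show -((k + 1 + 1 : ℕ) : ℤ) + 2 = -(k : ℤ) by push_cast; ring,
        show -((k + 1 + 1 : ℕ) : ℤ) + 1 = -(k + 1 : ℕ) by push_cast; ring,
        fibZ_neg_natCast, fibZ_neg_natCast, fibZ_neg_natCast, Nat.fib_add_two]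
      push_cast
      ring

theorem brousseau_fib_sum_polynomial_form (m n : ℕ) (r : ℤ) :
    (∑ k ∈ Finset.Icc 1 n, (k : ℤ) ^ m * fibZ (k + r)) =
      -(if m = 0 then (1 : ℤ) else 0) * fibZ r
        + (n : ℤ) ^ m * fibZ (n + r + 2)
        + (-1) ^ (m + 1) * ∑ j ∈ Finset.range (m + 1), eulerianA m j * fibZ (j + m + r + 1)
        - ∑ s ∈ Finset.Icc 1 m, (-1 : ℤ) ^ (s + 1) * (m.choose s : ℤ) * (n : ℤ) ^ (m - s) *
            ∑ j ∈ Finset.Icc 1 s, eulerianA s j * fibZ (j + n + s + r + 1) := by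
  have h := sum_Icc_pow_smul_of_fib_rec (fun e : ℕ => fibZ (e + r))
    (fun e => by simpa [add_right_comm _ r] using fibZ_add_two (e + r)) m n
  simp only [smul_eq_mul, Nat.cast_add, Nat.cast_zero, zero_add, Nat.cast_ofNat, Nat.cast_one] at h
  simpa only [add_right_comm _ r] using h
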